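/- #U(𝔽₅) = 100, where U(𝔽₅) = { (x₀:…:x₅) ∈ P⁵(𝔽₅) : x₀+⋯+x₅ = 0, x₀⁻¹+⋯+x₅⁻¹ = 0, all xᵢ ≠ 0 }. -/

import Mathlib

/-!
Every point of `U` has all coordinates nonzero, so it has a unique representative with
`x₀ = 1`, and both defining equations are invariant under scaling. Hence `U(𝔽₅)` is in bijection
with the affine solutions `(1, x₁, …, x₅)`, which a finite search counts.
-/

instance : Fact (Nat.Prime 5) := ⟨by norm_num⟩

/-- The open part of the Barth–Nieto quintic in `ℙ⁵(𝔽_5)`: all coordinates nonzero,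
`Σ xᵢ = 0` and `Σ xᵢ⁻¹ = 0`. -/
def barthNietoU : Set (Projectivization (ZMod 5) (Fin 6 → ZMod 5)) :=
  {x | (∀ i, x.rep i ≠ 0) ∧ (∑ i, x.rep i) = 0 ∧ (∑ i, (x.rep i)⁻¹) = 0}

namespace Projectivization

variable {K ι : Type*} [Field K]

theorem ncard_setOf_rep_eq_ncard_affineChart (P : (ι → K) → Prop)
    (hP : ∀ (c : Kˣ) (v : ι → K), P (c • v) ↔ P v) (i₀ : ι) (hP₀ : ∀ v, P v → v i₀ ≠ 0) :
    {x : Projectivization K (ι → K) | P x.rep}.ncard = {v : ι → K | v i₀ = 1 ∧ P v}.ncard := by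
  refine Set.ncard_congr (fun x _ ↦ (x.rep i₀)⁻¹ • x.rep) ?_ ?_ ?_
  · intro x hx
    have h₀ := hP₀ _ hx
    exact ⟨by simp [h₀], (hP (Units.mk0 _ (inv_ne_zero h₀)) _).2 hx⟩
  · intro x y hx hy hxy
    rw [← mk_rep x, ← mk_rep y, mk_eq_mk_iff' K]
    refine ⟨x.rep i₀ / y.rep i₀, ?_⟩
    rw [div_eq_mul_inv, mul_smul, ← hxy, smul_smul, mul_inv_cancel₀ (hP₀ _ hx), one_smul]
  · rintro v ⟨hv₁, hv⟩
    have hv₀ : v ≠ 0 := fun h ↦ hP₀ v hv (by simp [h])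
    obtain ⟨a, ha⟩ := exists_smul_eq_mk_rep K v hv₀
    refine ⟨mk K v hv₀, by simpa [← ha] using (hP a v).2 hv, ?_⟩
    simp [← ha, hv₁, Units.smul_def, smul_smul]

end Projectivization

section BarthNieto

variable {K ι : Type*} [Field K] [Fintype ι]

def IsBarthNietoVector (v : ι → K) : Prop :=
  (∀ i, v i ≠ 0) ∧ ∑ i, v i = 0 ∧ ∑ i, (v i)⁻¹ = 0

instance [DecidableEq K] : DecidablePred (IsBarthNietoVector (K := K) (ι := ι)) :=
  fun _ ↦ inferInstanceAs (Decidable (_ ∧ _))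

theorem isBarthNietoVector_units_smul_iff (c : Kˣ) (v : ι → K) :
    IsBarthNietoVector (c • v) ↔ IsBarthNietoVector v := by
  simp [IsBarthNietoVector, Units.smul_def, ← Finset.mul_sum, ← Finset.sum_mul]

end BarthNieto

set_option maxRecDepth 100000 in
theorem ncard_isBarthNietoVector_zmod_five :
    {v : Fin 6 → ZMod 5 | v 0 = 1 ∧ IsBarthNietoVector v}.ncard = 100 := by
  rw [Set.ncard_eq_toFinset_card']
  decide +kernel

/-- `#U(𝔽_5) = 100`. -/
theorem card_barthNietoU : barthNietoU.ncard = 100 :=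
  (Projectivization.ncard_setOf_rep_eq_ncard_affineChart _ isBarthNietoVector_units_smul_iff 0
    fun _ hv ↦ hv.1 0).trans ncard_isBarthNietoVector_zmod_five
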